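/- arXiv:2301.00121 — 6 statements merged into one kernel-verified Lean document; each statement's English description precedes it below -/
import Mathlib

section
/- With A = A(q,ε) and A* = diag(1,q,…,q^d) as in CBP(F;d,q,ε), define P = P(q,ε) ∈ Mat_{d+1}(F) with (i,j)-entry q^{ij}·(εq^{-i};q)_j/(εq;q)_j, where (a;q)_r = ∏_{ℓ=0}^{r−1}(1−aq^ℓ). Then A(q,ε)·P(q,ε) = P(q,ε)·A*(q^{-1}) and A*(q)·P(q,ε) = P(q,ε)·A(q^{-1},ε), where A*(q^{-1}) = diag(1,q^{-1},…,q^{-d}). -/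
/-!
Since `q ^ (d + 1) = 1`, the row index of `P` is naturally cyclic (row `i` only depends on
`x = q ^ i`), and `A(q, ε)`, `A(q⁻¹, ε)` are a diagonal plus a cyclic subdiagonal. Entrywise,
`A P = P A*(q⁻¹)` relates two consecutive rows of `P` and reduces to
`(1 - a) (a q; q)_j = (a; q)_j (1 - a q^j)` with `a = ε q^{-i}`, while `A* P = P A(q⁻¹, ε)`
relates two consecutive columns and reduces to `(a; q)_{j+1} = (a; q)_j (1 - a q^j)`. The only
exception is the wrap-around from column `d` to column `0`, which needs
`(ε q^{-i}; q)_{d+1} = (ε q; q)_{d+1}`: over a full period the factors are permuted cyclically.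
All denominators are nonzero because `ε` is not a `(d + 1)`-th root of unity.
-/

/-- The q-Pochhammer symbol `(a;q)_r = (1-a)(1-aq)⋯(1-aq^{r-1})`. -/
def qpoch {F : Type*} [Field F] (a q : F) (r : ℕ) : F :=
  ∏ ℓ ∈ Finset.range r, (1 - a * q ^ ℓ)

/-- The matrix `A(q,ε)` of the circular bidiagonal pair `CBP(F;d,q,ε)`. -/
def cbMat {F : Type*} [Field F] (d : ℕ) (q ε : F) : Matrix (Fin (d + 1)) (Fin (d + 1)) F :=
  Matrix.of fun i j : Fin (d + 1) =>
    if i.val = j.val then q⁻¹ ^ i.val * ε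
    else if i.val = j.val + 1 then 1 - q⁻¹ ^ i.val * ε
    else if i.val = 0 ∧ j.val = d then 1 - ε else 0

/-- The matrix `P(q,ε)` with entries `q^{ij} (εq^{-i};q)_j / (εq;q)_j`. -/
def Pmat {F : Type*} [Field F] (d : ℕ) (q ε : F) : Matrix (Fin (d + 1)) (Fin (d + 1)) F :=
  Matrix.of fun i j : Fin (d + 1) =>
    q ^ (i.val * j.val) * qpoch (ε * q⁻¹ ^ i.val) q j.val / qpoch (ε * q) q j.val

section QPochhammer

variable {F : Type*} [Field F]

@[simp]
lemma qpoch_zero (a q : F) : qpoch a q 0 = 1 :=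
  Finset.prod_range_zero _

lemma qpoch_succ (a q : F) (j : ℕ) : qpoch a q (j + 1) = qpoch a q j * (1 - a * q ^ j) :=
  Finset.prod_range_succ _ _

lemma qpoch_succ' (a q : F) (j : ℕ) : qpoch a q (j + 1) = (1 - a) * qpoch (a * q) q j := by
  rw [qpoch, Finset.prod_range_succ', pow_zero, mul_one, mul_comm, qpoch]
  exact congrArg _ (Finset.prod_congr rfl fun ℓ _ => by ring)

lemma qpoch_ne_zero {a q : F} (h : ∀ ℓ, a * q ^ ℓ ≠ 1) (j : ℕ) : qpoch a q j ≠ 0 :=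
  Finset.prod_ne_zero_iff.mpr fun ℓ _ => sub_ne_zero.mpr (h ℓ).symm

-- Multiplying `a` by `q` permutes the factors of a full period cyclically.
lemma qpoch_mul_self_of_pow_eq_one {a q : F} {n : ℕ} (hq : q ^ n = 1) :
    qpoch (a * q) q n = qpoch a q n := by
  cases n with
  | zero => simp
  | succ m => rw [qpoch_succ (a * q), qpoch_succ' a, mul_assoc, ← pow_succ', hq, mul_one, mul_comm]

lemma qpoch_mul_pow_of_pow_eq_one {a q : F} {n : ℕ} (hq : q ^ n = 1) (k : ℕ) :
    qpoch (a * q ^ k) q n = qpoch a q n := by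
  induction k with
  | zero => simp
  | succ k ih => rw [pow_succ, ← mul_assoc, qpoch_mul_self_of_pow_eq_one hq, ih]

lemma qpoch_mul_inv_pow_of_pow_eq_one {a q : F} {n : ℕ} (hq : q ^ n = 1) (k : ℕ) :
    qpoch (a * q⁻¹ ^ k) q n = qpoch a q n := by
  cases n with
  | zero => simp
  | succ m =>
    have hq0 : q ≠ 0 := by rintro rfl; simp at hq
    rw [← qpoch_mul_pow_of_pow_eq_one hq k, mul_assoc, ← mul_pow, inv_mul_cancel₀ hq0, one_pow,
      mul_one]

end QPochhammer

section Entries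

variable {F : Type*} [Field F] {q ε : F}

lemma mul_pow_ne_one_of_pow_ne_one {n : ℕ} (hq : q ^ n = 1) (hε : ε ^ n ≠ 1) (ℓ : ℕ) :
    ε * q ^ ℓ ≠ 1 := fun h => hε <|
  calc ε ^ n = (ε * q ^ ℓ) ^ n := by
        rw [mul_pow, ← pow_mul, mul_comm ℓ, pow_mul, hq, one_pow, mul_one]
    _ = 1 := by rw [h, one_pow]

/-- Row `i` of `Pmat d q ε` is `pmatEntry q ε (q ^ i)`: indexing rows by `x = q ^ i` makes the
cyclic wrap-around of the row index automatic. -/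
def pmatEntry (q ε x : F) (j : ℕ) : F :=
  x ^ j * qpoch (ε * x⁻¹) q j / qpoch (ε * q) q j

lemma Pmat_apply {d : ℕ} (i j : Fin (d + 1)) :
    Pmat d q ε i j = pmatEntry q ε (q ^ i.val) j.val := by
  simp only [Pmat, pmatEntry, Matrix.of_apply, pow_mul, inv_pow]

@[simp]
lemma pmatEntry_zero (x : F) : pmatEntry q ε x 0 = 1 := by
  simp [pmatEntry]

lemma pmatEntry_pow_card {n : ℕ} (hq : q ^ n = 1) (hε : ε ^ n ≠ 1) (i : ℕ) :
    pmatEntry q ε (q ^ i) n = 1 := by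
  rw [pmatEntry, ← pow_mul, mul_comm i, pow_mul, hq, one_pow, one_mul, ← inv_pow,
    qpoch_mul_inv_pow_of_pow_eq_one hq, qpoch_mul_self_of_pow_eq_one hq,
    div_self (qpoch_ne_zero (mul_pow_ne_one_of_pow_ne_one hq hε) n)]

lemma pmatEntry_row_recurrence (hq : q ≠ 0) {x y : F} (hxy : y * q = x) (j : ℕ) :
    x⁻¹ * ε * pmatEntry q ε x j + (1 - x⁻¹ * ε) * pmatEntry q ε y j =
      pmatEntry q ε x j * q⁻¹ ^ j := by
  subst hxy
  unfold pmatEntry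
  set a := ε * (y * q)⁻¹
  have ha : a * q = ε * y⁻¹ := by simp only [a, mul_inv, mul_assoc, inv_mul_cancel₀ hq, mul_one]
  have key : (1 - a) * qpoch (a * q) q j = qpoch a q j * (1 - a * q ^ j) := by
    rw [← qpoch_succ', qpoch_succ]
  have hQ : q ^ j * (q ^ j)⁻¹ = 1 := mul_inv_cancel₀ (pow_ne_zero j hq)
  rw [← ha, mul_comm _ ε, mul_pow, inv_pow]
  linear_combination (y ^ j / qpoch (ε * q) q j) * key -
    (y ^ j * qpoch a q j / qpoch (ε * q) q j) * hQ

lemma pmatEntry_col_recurrence {x : F} (hx : x ≠ 0) {j : ℕ} (hj : ε * q ^ (j + 1) ≠ 1) :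
    pmatEntry q ε x j * (q ^ j * ε) + pmatEntry q ε x (j + 1) * (1 - q ^ (j + 1) * ε) =
      x * pmatEntry q ε x j := by
  have hu : 1 - ε * q * q ^ j ≠ 0 :=
    sub_ne_zero.mpr (by rw [mul_assoc, ← pow_succ']; exact hj.symm)
  have hxx : x * x⁻¹ = 1 := mul_inv_cancel₀ hx
  rw [pmatEntry, pmatEntry, qpoch_succ, qpoch_succ, show 1 - q ^ (j + 1) * ε = 1 - ε * q * q ^ j by
    ring, div_mul_eq_mul_div _ (qpoch (ε * q) q j * _), mul_div_mul_right _ _ hu]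
  linear_combination -(x ^ j * qpoch (ε * x⁻¹) q j / qpoch (ε * q) q j * ε * q ^ j) * hxx

end Entries

lemma Fin.add_one_ne_self_of_one_le {d : ℕ} (hd : 1 ≤ d) (k : Fin (d + 1)) : k + 1 ≠ k := by
  have hk := Fin.val_add_one k
  intro h
  rw [h] at hk
  simp only [Fin.ext_iff, Fin.val_last] at hk
  split_ifs at hk <;> omega

section Matrices

variable {F : Type*} [Field F] {d : ℕ} {q ε : F}

/-- The corner entry `1 - ε` is the subdiagonal entry `1 - q⁻¹ ^ 0 * ε` of row `0`, whose cyclic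
predecessor is row `d`. -/
lemma cbMat_apply (hd : 1 ≤ d) (i k : Fin (d + 1)) :
    cbMat d q ε i k =
      if k = i then q⁻¹ ^ i.val * ε else if k + 1 = i then 1 - q⁻¹ ^ i.val * ε else 0 := by
  have hk := Fin.val_add_one k
  simp only [cbMat, Matrix.of_apply, Fin.ext_iff, Fin.val_last] at hk ⊢
  split_ifs at hk ⊢ <;> first | rfl | omega | simp_all

lemma cbMat_mul_apply (hd : 1 ≤ d) (M : Matrix (Fin (d + 1)) (Fin (d + 1)) F)
    (i j : Fin (d + 1)) :
    (cbMat d q ε * M) i j = q⁻¹ ^ i.val * ε * M i j + (1 - q⁻¹ ^ i.val * ε) * M (i - 1) j := by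
  have hne : i - 1 ≠ i := fun h =>
    Fin.add_one_ne_self_of_one_le hd (i - 1) (by rw [sub_add_cancel, h])
  rw [Matrix.mul_apply, Fintype.sum_eq_add i (i - 1) hne.symm]
  · simp [cbMat_apply hd, hne]
  · rintro k ⟨hki, hkj⟩
    simp [cbMat_apply hd, hki, ← eq_sub_iff_add_eq, hkj]

lemma mul_cbMat_apply (hd : 1 ≤ d) (M : Matrix (Fin (d + 1)) (Fin (d + 1)) F)
    (i j : Fin (d + 1)) :
    (M * cbMat d q ε) i j =
      M i j * (q⁻¹ ^ j.val * ε) + M i (j + 1) * (1 - q⁻¹ ^ (j + 1).val * ε) := by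
  have hne : j + 1 ≠ j := Fin.add_one_ne_self_of_one_le hd j
  rw [Matrix.mul_apply, Fintype.sum_eq_add j (j + 1) hne.symm]
  · simp [cbMat_apply hd, Ne.symm hne]
  · rintro k ⟨hkj, hkj'⟩
    simp [cbMat_apply hd, Ne.symm hkj, Ne.symm hkj']

lemma pow_val_add_one (hq : q ^ (d + 1) = 1) (k : Fin (d + 1)) :
    q ^ (k + 1).val = q ^ (k.val + 1) := by
  rw [Fin.val_add_one]
  split_ifs with h
  · rw [h, Fin.val_last, hq, pow_zero]
  · rfl

lemma Pmat_row_recurrence (hq : q ^ (d + 1) = 1) (i j : Fin (d + 1)) :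
    q⁻¹ ^ i.val * ε * Pmat d q ε i j + (1 - q⁻¹ ^ i.val * ε) * Pmat d q ε (i - 1) j =
      Pmat d q ε i j * q⁻¹ ^ j.val := by
  have hq0 : q ≠ 0 := by rintro rfl; simp at hq
  have hprev : q ^ (i - 1).val * q = q ^ i.val := by
    rw [← pow_succ, ← pow_val_add_one hq, sub_add_cancel]
  simp only [Pmat_apply, inv_pow q i.val]
  exact pmatEntry_row_recurrence hq0 hprev j

lemma Pmat_col_recurrence (hq : q ^ (d + 1) = 1) (hε : ε ^ (d + 1) ≠ 1) (i j : Fin (d + 1)) :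
    Pmat d q ε i j * (q ^ j.val * ε) + Pmat d q ε i (j + 1) * (1 - q ^ (j + 1).val * ε) =
      q ^ i.val * Pmat d q ε i j := by
  have hnext : Pmat d q ε i (j + 1) = pmatEntry q ε (q ^ i.val) (j.val + 1) := by
    rw [Pmat_apply, Fin.val_add_one]
    split_ifs with h
    · rw [h, Fin.val_last, pmatEntry_pow_card hq hε, pmatEntry_zero]
    · rfl
  rw [hnext, Pmat_apply, pow_val_add_one hq]
  exact pmatEntry_col_recurrence (pow_ne_zero _ (by rintro rfl; simp at hq))
    (mul_pow_ne_one_of_pow_ne_one hq hε _)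

end Matrices

theorem stmt3 {F : Type*} [Field F] (d : ℕ) (hd : 1 ≤ d) (q ε : F)
    (hq : IsPrimitiveRoot q (d + 1))
    (hε : ∀ i : ℕ, i ≤ d → ε ≠ q ^ i) :
    cbMat d q ε * Pmat d q ε =
        Pmat d q ε * Matrix.diagonal (fun i : Fin (d + 1) => q⁻¹ ^ i.val) ∧
      Matrix.diagonal (fun i : Fin (d + 1) => q ^ i.val) * Pmat d q ε =
        Pmat d q ε * cbMat d q⁻¹ ε := by
  have hq1 : q ^ (d + 1) = 1 := hq.pow_eq_one
  have hε1 : ε ^ (d + 1) ≠ 1 := fun h => by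
    obtain ⟨i, hi, rfl⟩ := hq.eq_pow_of_pow_eq_one h
    exact hε i (Nat.lt_succ_iff.mp hi) rfl
  constructor
  · ext i j
    rw [cbMat_mul_apply hd, Matrix.mul_diagonal, Pmat_row_recurrence hq1]
  · ext i j
    rw [Matrix.diagonal_mul, mul_cbMat_apply hd, inv_inv, Pmat_col_recurrence hq1 hε1]
end

section
/- Let n = d+1 be prime with d ≥ 1, char(F) = n, and γ ∈ F not among 0,1,…,d. Define A = A(γ) ∈ Mat_n(F) by A_{i,i} = i+γ for 0 ≤ i ≤ d, A_{0,d} = −γ, A_{i,i-1} = −i−γ for 1 ≤ i ≤ d, all other entries zero, and A* = diag(0,1,…,d). Then AA* − A*A + A − A* = γI. -/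
/-!
Commuting with a diagonal matrix `diag(f)` scales the `(i, j)` entry by `f j - f i`, so the
`(i, j)` entry of `A A* - A* A + A` is `(j - i + 1) A_{ij}`. This vanishes on the subdiagonal
(`i = j + 1`) and, because `d + 1 = 0` in `F`, in the corner `(0, d)`; on the diagonal it is
`i + γ`, from which `A*` removes `i`.
-/

open Matrix

theorem Matrix.mul_diagonal_sub_diagonal_mul_apply {n R : Type*} [Fintype n] [DecidableEq n]
    [CommRing R] (M : Matrix n n R) (f : n → R) (i j : n) :
    (M * diagonal f - diagonal f * M) i j = (f j - f i) * M i j := by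
  rw [Matrix.sub_apply, mul_diagonal, diagonal_mul]
  ring

theorem stmt6_general {F : Type*} [Field F] (d : ℕ)
    (hchar : CharP F (d + 1)) (γ : F)
    (A Astar : Matrix (Fin (d + 1)) (Fin (d + 1)) F)
    (hA : A = Matrix.of fun i j : Fin (d + 1) =>
      if i.val = j.val then (i.val : F) + γ
      else if i.val = j.val + 1 then -(i.val : F) - γ
      else if i.val = 0 ∧ j.val = d then -γ else 0)
    (hAstar : Astar = Matrix.diagonal fun i : Fin (d + 1) => (i.val : F)) :
    A * Astar - Astar * A + A - Astar = γ • (1 : Matrix (Fin (d + 1)) (Fin (d + 1)) F) := by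
  have hd : (d : F) + 1 = 0 := by exact_mod_cast CharP.cast_eq_zero F (d + 1)
  subst hA hAstar
  ext i j
  rw [Matrix.sub_apply, Matrix.add_apply, mul_diagonal_sub_diagonal_mul_apply]
  simp only [of_apply, diagonal_apply, Matrix.smul_apply, one_apply, Fin.ext_iff, smul_eq_mul]
  split_ifs with hdiag hsub hcorner
  · rw [hdiag]; ring
  · rw [hsub, Nat.cast_succ]; ring
  · rw [hcorner.1, hcorner.2, Nat.cast_zero]; linear_combination (-γ) * hd
  · ring

theorem stmt6 {F : Type*} [Field F] (d : ℕ) (hd : 1 ≤ d)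
    (hprime : Nat.Prime (d + 1)) (hchar : CharP F (d + 1)) (γ : F)
    (hγ : ∀ i : ℕ, i ≤ d → γ ≠ (i : F))
    (A Astar : Matrix (Fin (d + 1)) (Fin (d + 1)) F)
    (hA : A = Matrix.of fun i j : Fin (d + 1) =>
      if i.val = j.val then (i.val : F) + γ
      else if i.val = j.val + 1 then -(i.val : F) - γ
      else if i.val = 0 ∧ j.val = d then -γ else 0)
    (hAstar : Astar = Matrix.diagonal fun i : Fin (d + 1) => (i.val : F)) :
    A * Astar - Astar * A + A - Astar = γ • (1 : Matrix (Fin (d + 1)) (Fin (d + 1)) F) :=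
  stmt6_general d hchar γ A Astar hA hAstar
end

section
/- Let A, A* be a circular bidiagonal pair on a finite-dimensional vector space V over F. Then A is multiplicity-free: A is diagonalizable and every eigenspace of A has dimension one. The same holds for A*. -/
/-!
Each of `A`, `A*` is diagonal in some basis, so `V` is spanned by its eigenvectors.
For the multiplicity, write an eigenvector `v` of `A` in a basis where `A` is circular bidiagonal.
Row `i + 1` of `A v = μ v` reads `a_{i+1,i} v_i + a_{i+1,i+1} v_{i+1} = μ v_{i+1}`, and the
subdiagonal entry `a_{i+1,i}` is nonzero, so `v_{i+1} = 0` forces `v_i = 0`. Hence `v` is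
determined by its last coordinate, and every eigenspace embeds into `F`.
-/

/-- A square matrix is circular bidiagonal: nonzero entries only on the diagonal,
the subdiagonal, and the top-right corner; all subdiagonal entries and the
top-right corner entry are nonzero. -/
def IsCircBidiag {F : Type*} [Field F] {d : ℕ} (M : Matrix (Fin (d + 1)) (Fin (d + 1)) F) : Prop :=
  (∀ i j : Fin (d + 1), M i j ≠ 0 → i = j ∨ i.val = j.val + 1 ∨ (i.val = 0 ∧ j.val = d)) ∧
  (∀ i j : Fin (d + 1), i.val = j.val + 1 → M i j ≠ 0) ∧
  M 0 (Fin.last d) ≠ 0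

/-- A circular bidiagonal pair on `V`. -/
def IsCBPair {F V : Type*} [Field F] [AddCommGroup V] [Module F V] (d : ℕ)
    (A Astar : V →ₗ[F] V) : Prop :=
  (∃ b : Module.Basis (Fin (d + 1)) F V,
    IsCircBidiag (LinearMap.toMatrix b b A) ∧ (LinearMap.toMatrix b b Astar).IsDiag) ∧
  (∃ b : Module.Basis (Fin (d + 1)) F V,
    IsCircBidiag (LinearMap.toMatrix b b Astar) ∧ (LinearMap.toMatrix b b A).IsDiag)

open Module Module.End LinearMap Matrix

section Diagonal

variable {R M ι : Type*} [CommRing R] [Nontrivial R] [AddCommGroup M] [Module R M]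
  [Fintype ι] [DecidableEq ι]

theorem iSup_eigenspace_eq_top_of_isDiag (A : End R M) (b : Basis ι R M)
    (hA : (toMatrix b b A).IsDiag) : ⨆ μ, eigenspace A μ = ⊤ := by
  rw [eq_top_iff, ← b.span_eq, Submodule.span_le]
  rintro - ⟨i, rfl⟩
  have hi := hasEigenvector_toLin_diagonal (toMatrix b b A).diag i b
  rw [hA.diagonal_diag, toLin_toMatrix] at hi
  exact Submodule.mem_iSup_of_mem _ hi.1

end Diagonal

namespace IsCircBidiag

variable {F : Type*} [Field F] {d : ℕ} {M : Matrix (Fin (d + 1)) (Fin (d + 1)) F}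

theorem mulVec_succ (hM : IsCircBidiag M) (w : Fin (d + 1) → F) (i : Fin d) :
    (M *ᵥ w) i.succ = M i.succ i.castSucc * w i.castSucc + M i.succ i.succ * w i.succ := by
  refine Fintype.sum_eq_add _ _ Fin.castSucc_lt_succ.ne fun j ⟨hj₁, hj₂⟩ => ?_
  suffices M i.succ j = 0 by simp [this]
  by_contra hMj
  rcases hM.1 _ _ hMj with h | h | ⟨h, -⟩
  · exact hj₂ h.symm
  · exact hj₁ (Fin.ext (by simp at h ⊢; omega))
  · simp at h

theorem eq_zero_of_mulVec_eq_smul (hM : IsCircBidiag M) {μ : F} {w : Fin (d + 1) → F}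
    (hw : M *ᵥ w = μ • w) (hlast : w (Fin.last d) = 0) : w = 0 := by
  funext i
  induction i using Fin.reverseInduction with
  | last => exact hlast
  | cast i ih =>
    have hrow := congrFun hw i.succ
    rw [hM.mulVec_succ] at hrow
    simpa [ih, hM.2.1 i.succ i.castSucc (by simp)] using hrow

end IsCircBidiag

section CircBidiag

variable {F V : Type*} [Field F] [AddCommGroup V] [Module F V] {d : ℕ}

theorem injective_coord_last_comp_eigenspace_subtype (A : End F V)
    (b : Basis (Fin (d + 1)) F V) (hA : IsCircBidiag (toMatrix b b A)) (μ : F) :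
    Function.Injective ((b.coord (Fin.last d)).comp (eigenspace A μ).subtype) := by
  rw [← ker_eq_bot, eq_bot_iff]
  rintro ⟨v, hv⟩ hlast
  have hw : toMatrix b b A *ᵥ b.repr v = μ • b.repr v := by
    rw [toMatrix_mulVec_repr, mem_eigenspace_iff.mp hv, map_smul, Finsupp.coe_smul]
  simpa [Submodule.mem_bot] using hA.eq_zero_of_mulVec_eq_smul hw hlast

theorem finrank_eigenspace_eq_one_of_isCircBidiag (A : End F V) (b : Basis (Fin (d + 1)) F V)
    (hA : IsCircBidiag (toMatrix b b A)) {μ : F} (hμ : HasEigenvalue A μ) :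
    finrank F (eigenspace A μ) = 1 := by
  have hinj := injective_coord_last_comp_eigenspace_subtype A b hA μ
  have : Module.Finite F (eigenspace A μ) := Module.Finite.of_injective _ hinj
  exact le_antisymm ((finrank_le_finrank_of_injective hinj).trans_eq (finrank_self F))
    (Submodule.one_le_finrank_iff.mpr hμ)

end CircBidiag

theorem stmt11_general {F V : Type*} [Field F] [AddCommGroup V] [Module F V]
    (d : ℕ)
    (A Astar : V →ₗ[F] V) (hpair : IsCBPair d A Astar) :
    ((⨆ μ : F, Module.End.eigenspace A μ) = ⊤ ∧
      ∀ μ : F, Module.End.HasEigenvalue A μ →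
        Module.finrank F (Module.End.eigenspace A μ) = 1) ∧
    ((⨆ μ : F, Module.End.eigenspace Astar μ) = ⊤ ∧
      ∀ μ : F, Module.End.HasEigenvalue Astar μ →
        Module.finrank F (Module.End.eigenspace Astar μ) = 1) := by
  obtain ⟨⟨b, hA, hAstar⟩, ⟨b', hAstar', hA'⟩⟩ := hpair
  exact ⟨⟨iSup_eigenspace_eq_top_of_isDiag A b' hA',
      fun _ => finrank_eigenspace_eq_one_of_isCircBidiag A b hA⟩,
    ⟨iSup_eigenspace_eq_top_of_isDiag Astar b hAstar,
      fun _ => finrank_eigenspace_eq_one_of_isCircBidiag Astar b' hAstar'⟩⟩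

theorem stmt11 {F V : Type*} [Field F] [AddCommGroup V] [Module F V]
    [FiniteDimensional F V] (d : ℕ) (hdim : Module.finrank F V = d + 1)
    (A Astar : V →ₗ[F] V) (hpair : IsCBPair d A Astar) :
    ((⨆ μ : F, Module.End.eigenspace A μ) = ⊤ ∧
      ∀ μ : F, Module.End.HasEigenvalue A μ →
        Module.finrank F (Module.End.eigenspace A μ) = 1) ∧
    ((⨆ μ : F, Module.End.eigenspace Astar μ) = ⊤ ∧
      ∀ μ : F, Module.End.HasEigenvalue Astar μ →
        Module.finrank F (Module.End.eigenspace Astar μ) = 1) :=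
  stmt11_general d A Astar hpair
end

section
/- Let A, A* be a circular bidiagonal pair on a (d+1)-dimensional F-vector space V, with standard orderings of primitive idempotents E_0,…,E_d of A and E*_0,…,E*_d of A* (indices mod n = d+1). Then for all 0 ≤ i, j ≤ d: E_i E*_j ≠ 0 and E*_i E_j ≠ 0. -/
/-!
Let `E*_j` be the idempotents in standard order. Since `A - a_i` maps `E*_i V` onto
`E*_{i+1} V`, a suitable monic polynomial of degree `d` in `A` maps `E*_j V` onto
`E*_{j+d} V ≠ 0`, while `A^s E*_j V ⊆ E*_j V + ⋯ + E*_{j+s} V` is killed by `E*_{j+d}` for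
`s < d`. Hence `E*_{j+d} p(A) E*_j = p_d • E*_{j+d} A^d E*_j ≠ 0` for every `p` of degree `d`.
The Lagrange polynomial of `θ_i` has degree `d` and sends `A` to `E_i`, so
`E*_{j+d} E_i E*_j ≠ 0`; this gives `E_i E*_j ≠ 0`, and, with `j = i + 1` (so `j + d = i`),
`E*_i E_j ≠ 0`.
-/

open Polynomial
open scoped Fin.NatCast

theorem mul_aeval_mul_eq_coeff_smul {R 𝒜 : Type*} [CommSemiring R] [Semiring 𝒜] [Algebra R 𝒜]
    {q a r : 𝒜} {d : ℕ} (hlow : ∀ s < d, q * a ^ s * r = 0) {p : R[X]} (hp : p.natDegree ≤ d) :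
    q * aeval a p * r = p.coeff d • (q * a ^ d * r) := by
  rw [aeval_eq_sum_range' (Nat.lt_succ_of_le hp), Finset.mul_sum, Finset.sum_mul,
    Finset.sum_range_succ, Finset.sum_eq_zero, zero_add, mul_smul_comm, smul_mul_assoc]
  intro s hs
  rw [mul_smul_comm, smul_mul_assoc, hlow s (Finset.mem_range.1 hs), smul_zero]

namespace Module.End

variable {F V ι : Type*} [Field F] [AddCommGroup V] [Module F V] [Fintype ι]
  {A : Module.End F V} {E : ι → Module.End F V} {θ : ι → F}

theorem aeval_eq_sum_eval_smul (hsum : ∑ i, E i = 1)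
    (hE : ∀ i, LinearMap.range (E i) ≤ eigenspace A (θ i)) (p : F[X]) :
    aeval A p = ∑ i, p.eval (θ i) • E i := by
  have hcol : ∀ i, aeval A p * E i = p.eval (θ i) • E i := by
    intro i
    ext v
    by_cases hv : E i v = 0
    · simp [hv]
    · exact aeval_apply_of_hasEigenvector ⟨hE i ⟨v, rfl⟩, hv⟩
  rw [← mul_one (aeval A p), ← hsum, Finset.mul_sum]
  exact Finset.sum_congr rfl fun i _ => hcol i

theorem eq_aeval_lagrange_basis [DecidableEq ι] (hsum : ∑ i, E i = 1)
    (hE : ∀ i, LinearMap.range (E i) ≤ eigenspace A (θ i)) (hθ : Function.Injective θ) (i : ι) :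
    E i = aeval A (Lagrange.basis Finset.univ θ i) := by
  rw [aeval_eq_sum_eval_smul hsum hE, Finset.sum_eq_single i]
  · rw [Lagrange.eval_basis_self hθ.injOn (Finset.mem_univ i), one_smul]
  · intro k _ hk
    rw [Lagrange.eval_basis_of_ne hk.symm (Finset.mem_univ k), zero_smul]
  · simp

end Module.End

/-- The standard ordering of the paper, where `a i = tr (A * Es i)`; indices are taken
mod `d + 1`. -/
def IsCyclicRaising {F V : Type*} [Field F] [AddCommGroup V] [Module F V] {d : ℕ}
    (A : Module.End F V) (Es : Fin (d + 1) → Module.End F V) (a : Fin (d + 1) → F) : Prop :=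
  ∀ i, (LinearMap.range (Es i)).map (A - a i • 1) = LinearMap.range (Es (i + 1))

namespace IsCyclicRaising

variable {F V : Type*} [Field F] [AddCommGroup V] [Module F V] {d : ℕ}
  {A : Module.End F V} {Es : Fin (d + 1) → Module.End F V} {a : Fin (d + 1) → F}

theorem map_range_le_sup (h : IsCyclicRaising A Es a) (i : Fin (d + 1)) :
    (LinearMap.range (Es i)).map A ≤ LinearMap.range (Es i) ⊔ LinearMap.range (Es (i + 1)) := by
  rintro _ ⟨v, hv, rfl⟩
  have hsplit : A v = a i • v + (A - a i • 1) v := by simp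
  rw [hsplit]
  exact Submodule.add_mem_sup (Submodule.smul_mem _ _ hv) (h i ▸ ⟨v, hv, rfl⟩)

theorem map_pow_range_le (h : IsCyclicRaising A Es a) (s : ℕ) (j : Fin (d + 1)) :
    (LinearMap.range (Es j)).map (A ^ s) ≤ ⨆ ℓ ≤ s, LinearMap.range (Es (j + ℓ)) := by
  induction s with
  | zero =>
    rw [pow_zero, Module.End.one_eq_id, Submodule.map_id]
    refine le_iSup₂_of_le 0 le_rfl ?_
    rw [Nat.cast_zero, add_zero]
  | succ s ih =>
    rw [pow_succ', Module.End.mul_eq_comp, Submodule.map_comp]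
    refine (Submodule.map_mono ih).trans ?_
    rw [Submodule.map_iSup]
    refine iSup_le fun ℓ => ?_
    rw [Submodule.map_iSup]
    refine iSup_le fun hℓ => (h.map_range_le_sup _).trans (sup_le ?_ ?_)
    · exact le_iSup₂_of_le ℓ (by omega) le_rfl
    · refine le_iSup₂_of_le (ℓ + 1) (by omega) ?_
      rw [Nat.cast_succ, add_assoc]

theorem exists_monic_map_range_eq (h : IsCyclicRaising A Es a) (j : Fin (d + 1)) (m : ℕ) :
    ∃ p : F[X], p.Monic ∧ p.natDegree = m ∧
      (LinearMap.range (Es j)).map (aeval A p) = LinearMap.range (Es (j + m)) := by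
  induction m with
  | zero => exact ⟨1, monic_one, natDegree_one, by simp [Module.End.one_eq_id]⟩
  | succ m ih =>
    obtain ⟨p, hmonic, hdeg, hmap⟩ := ih
    refine ⟨(X - C (a (j + m))) * p, (monic_X_sub_C _).mul hmonic, ?_, ?_⟩
    · rw [(monic_X_sub_C _).natDegree_mul hmonic, natDegree_X_sub_C, hdeg, add_comm]
    · rw [map_mul, Module.End.mul_eq_comp, Submodule.map_comp, hmap, map_sub, aeval_X, aeval_C,
        Algebra.algebraMap_eq_smul_one, h, Nat.cast_succ, add_assoc]

theorem range_ne_bot [Nontrivial V] (h : IsCyclicRaising A Es a) (hsum : ∑ i, Es i = 1)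
    (i : Fin (d + 1)) : LinearMap.range (Es i) ≠ ⊥ := by
  intro hi
  have hzero : ∀ k, Es k = 0 := by
    intro k
    obtain ⟨p, -, -, hmap⟩ := h.exists_monic_map_range_eq i (k - i).val
    rwa [hi, Submodule.map_bot, Fin.cast_val_eq_self, add_sub_cancel, eq_comm,
      LinearMap.range_eq_bot] at hmap
  have hone : (1 : Module.End F V) = 0 := by simpa [hzero] using hsum.symm
  exact one_ne_zero hone

theorem mul_pow_mul_eq_zero (h : IsCyclicRaising A Es a)
    (hidem : ∀ i j, Es i * Es j = if i = j then Es i else 0) {s : ℕ} (hs : s < d)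
    (j : Fin (d + 1)) : Es (j + d) * A ^ s * Es j = 0 := by
  suffices hker : (LinearMap.range (Es j)).map (A ^ s) ≤ LinearMap.ker (Es (j + d)) by
    rwa [mul_assoc, Module.End.mul_eq_comp, ← LinearMap.range_le_ker_iff, Module.End.mul_eq_comp,
      LinearMap.range_comp]
  refine (h.map_pow_range_le s j).trans (iSup₂_le fun ℓ hℓ => ?_)
  have hne : j + d ≠ j + ℓ := by
    rw [Ne, add_right_inj, Fin.ext_iff, Fin.val_cast_of_lt (by omega), Fin.val_cast_of_lt (by omega)]
    omega
  rw [LinearMap.range_le_ker_iff, ← Module.End.mul_eq_comp, hidem, if_neg hne]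

theorem mul_pow_mul_ne_zero [Nontrivial V] (h : IsCyclicRaising A Es a)
    (hidem : ∀ i j, Es i * Es j = if i = j then Es i else 0) (hsum : ∑ i, Es i = 1)
    (j : Fin (d + 1)) : Es (j + d) * A ^ d * Es j ≠ 0 := by
  obtain ⟨q, hmonic, hqdeg, hmap⟩ := h.exists_monic_map_range_eq j d
  have hq : Es (j + d) * aeval A q * Es j = Es (j + d) * A ^ d * Es j := by
    rw [mul_aeval_mul_eq_coeff_smul (fun s hs => h.mul_pow_mul_eq_zero hidem hs j) hqdeg.le,
      show q.coeff d = 1 from hqdeg ▸ hmonic.coeff_natDegree, one_smul]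
  rw [← hq]
  obtain ⟨_, ⟨v, hv, rfl⟩, hv0⟩ :=
    Submodule.exists_mem_ne_zero_of_ne_bot (hmap ▸ h.range_ne_bot hsum (j + d))
  have hfix : ∀ k, ∀ x ∈ LinearMap.range (Es k), Es k x = x := fun k x hx =>
    (LinearMap.IsIdempotentElem.mem_range_iff (by simp [IsIdempotentElem, hidem])).mp hx
  intro hzero
  have := congr($hzero v)
  simp only [Module.End.mul_apply, LinearMap.zero_apply, hfix j v hv] at this
  exact hv0 (by rwa [hfix _ _ (hmap ▸ ⟨v, hv, rfl⟩)] at this)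

theorem mul_aeval_mul_ne_zero [Nontrivial V] (h : IsCyclicRaising A Es a)
    (hidem : ∀ i j, Es i * Es j = if i = j then Es i else 0) (hsum : ∑ i, Es i = 1)
    {p : F[X]} (hp : p ≠ 0) (hdeg : p.natDegree = d) (j : Fin (d + 1)) :
    Es (j + d) * aeval A p * Es j ≠ 0 := by
  rw [mul_aeval_mul_eq_coeff_smul (fun s hs => h.mul_pow_mul_eq_zero hidem hs j) hdeg.le]
  exact smul_ne_zero (by rwa [← hdeg, coeff_natDegree, leadingCoeff_ne_zero])
    (h.mul_pow_mul_ne_zero hidem hsum j)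

end IsCyclicRaising

theorem stmt13_general {F V : Type*} [Field F] [AddCommGroup V] [Module F V]
    [FiniteDimensional F V] (d : ℕ) (hdim : Module.finrank F V = d + 1)
    (A : Module.End F V)
    (θ : Fin (d + 1) → F) (hθ : Function.Injective θ)
    (E Estar : Fin (d + 1) → Module.End F V)
    (hidems : ∀ i j : Fin (d + 1), Estar i * Estar j = if i = j then Estar i else 0)
    (hsum : ∑ i, E i = 1) (hsums : ∑ i, Estar i = 1)
    (hrange : ∀ i : Fin (d + 1), LinearMap.range (E i) = Module.End.eigenspace A (θ i))
    -- the orderings are standard: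
    (hstds : ∀ i : Fin (d + 1),
      Submodule.map (A - (LinearMap.trace F V (A * Estar i)) • 1)
        (LinearMap.range (Estar i)) = LinearMap.range (Estar (i + 1))) :
    ∀ i j : Fin (d + 1), E i * Estar j ≠ 0 ∧ Estar i * E j ≠ 0 := by
  have : Nontrivial V := Module.nontrivial_of_finrank_pos (R := F) (by omega)
  have hraising : IsCyclicRaising A Estar (fun i => LinearMap.trace F V (A * Estar i)) := hstds
  have key : ∀ i j, Estar (j + d) * E i * Estar j ≠ 0 := by
    intro i j
    have hinj : Set.InjOn θ (Finset.univ : Finset (Fin (d + 1))) := hθ.injOn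
    rw [Module.End.eq_aeval_lagrange_basis hsum (fun k => (hrange k).le) hθ i]
    refine hraising.mul_aeval_mul_ne_zero hidems hsums
      (Lagrange.basis_ne_zero hinj (Finset.mem_univ i)) ?_ j
    rw [Lagrange.natDegree_basis hinj (Finset.mem_univ i), Finset.card_univ, Fintype.card_fin,
      Nat.add_sub_cancel]
  intro i j
  refine ⟨fun h => key i j (by rw [mul_assoc, h, mul_zero]), fun h => ?_⟩
  have hshift : i + 1 + (d : Fin (d + 1)) = i := by
    rw [add_assoc, add_comm 1, Fin.natCast_eq_last, Fin.last_add_one, add_zero]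
  have := key j (i + 1)
  rw [hshift] at this
  exact this (by rw [h, zero_mul])

theorem stmt13 {F V : Type*} [Field F] [AddCommGroup V] [Module F V]
    [FiniteDimensional F V] (d : ℕ) (hdim : Module.finrank F V = d + 1)
    (A Astar : Module.End F V) (hpair : IsCBPair d A Astar)
    (θ θs : Fin (d + 1) → F) (hθ : Function.Injective θ) (hθs : Function.Injective θs)
    (E Estar : Fin (d + 1) → Module.End F V)
    (hidem : ∀ i j : Fin (d + 1), E i * E j = if i = j then E i else 0)
    (hidems : ∀ i j : Fin (d + 1), Estar i * Estar j = if i = j then Estar i else 0)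
    (hsum : ∑ i, E i = 1) (hsums : ∑ i, Estar i = 1)
    (hrange : ∀ i : Fin (d + 1), LinearMap.range (E i) = Module.End.eigenspace A (θ i))
    (hranges : ∀ i : Fin (d + 1), LinearMap.range (Estar i) = Module.End.eigenspace Astar (θs i))
    -- the orderings are standard:
    (hstd : ∀ i : Fin (d + 1),
      Submodule.map (Astar - (LinearMap.trace F V (Astar * E i)) • 1)
        (LinearMap.range (E i)) = LinearMap.range (E (i + 1)))
    (hstds : ∀ i : Fin (d + 1),
      Submodule.map (A - (LinearMap.trace F V (A * Estar i)) • 1)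
        (LinearMap.range (Estar i)) = LinearMap.range (Estar (i + 1))) :
    ∀ i j : Fin (d + 1), E i * Estar j ≠ 0 ∧ Estar i * E j ≠ 0 :=
  stmt13_general d hdim A θ hθ E Estar hidems hsum hsums hrange hstds
end

section
/- Let A, A* be a circular bidiagonal pair on a (d+1)-dimensional F-vector space V, with standard orderings of primitive idempotents such that E_iE*_j ≠ 0 for all i,j. Then the (d+1)² maps E_i E*_j (0 ≤ i,j ≤ d) form a basis of End(V); equivalently, the maps A^i (A*)^j (0 ≤ i,j ≤ d) form a basis of End(V). -/
/-!
Sandwiching a vanishing combination of the products `E i * Estar j` between `E k` and `Estar l`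
isolates the coefficient of `E k * Estar l`, so these products are linearly independent.
Expanding `A ^ n = ∑ θ i ^ n • E i` and `Astar ^ n = ∑ θs j ^ n • Estar j`, the family
`A ^ i * Astar ^ j` is obtained from it by the Kronecker product of the Vandermonde matrices of
`θ` and `θs`, which is invertible because the eigenvalues are distinct. Both families have
`(d + 1) ^ 2 = dim End(V)` members.
-/

open Module
open scoped Kronecker

theorem LinearIndependent.sum_smul_of_det_ne_zero {F M ι : Type*} [Field F] [AddCommGroup M]
    [Module F M] [Fintype ι] [DecidableEq ι] {b : ι → M} (hb : LinearIndependent F b)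
    {P : Matrix ι ι F} (hP : P.det ≠ 0) :
    LinearIndependent F (fun j => ∑ i, P i j • b i) := by
  have hker : LinearMap.ker (Fintype.linearCombination F b) = ⊥ :=
    LinearMap.ker_eq_bot.mpr (linearIndependent_iff_injective_fintypeLinearCombination.mp hb)
  exact (Matrix.linearIndependent_cols_of_det_ne_zero hP).map' _ hker

theorem Module.End.mul_eq_smul_of_range_le_eigenspace {R M : Type*} [CommRing R]
    [AddCommGroup M] [Module R M] {a e : Module.End R M} {μ : R}
    (h : LinearMap.range e ≤ a.eigenspace μ) : a * e = μ • e :=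
  LinearMap.ext fun v => Module.End.mem_eigenspace_iff.mp (h ⟨v, rfl⟩)

theorem pow_eq_sum_smul_of_mul_eq_smul {F R ι : Type*} [CommSemiring F] [Semiring R]
    [Algebra F R] [Fintype ι] {a : R} {e : ι → R} {θ : ι → F}
    (he : ∑ i, e i = 1) (ha : ∀ i, a * e i = θ i • e i) (n : ℕ) :
    a ^ n = ∑ i, θ i ^ n • e i := by
  induction n with
  | zero => simpa using he.symm
  | succ n ih =>
    rw [pow_succ', ih, Finset.mul_sum]
    refine Finset.sum_congr rfl fun i _ => ?_
    rw [mul_smul_comm, ha, smul_smul, pow_succ]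

section

variable {F R : Type*} [Field F] [Ring R] [Algebra F R]

theorem linearIndependent_mul_of_orthogonalIdempotents {ι κ : Type*} [Fintype ι] [Fintype κ]
    [DecidableEq ι] [DecidableEq κ] {e : ι → R} {f : κ → R} (he : OrthogonalIdempotents e)
    (hf : OrthogonalIdempotents f) (hef : ∀ i j, e i * f j ≠ 0) :
    LinearIndependent F (fun p : ι × κ => e p.1 * f p.2) := by
  rw [Fintype.linearIndependent_iff]
  intro c hc ⟨k, l⟩
  have hsandwich : ∀ p : ι × κ,
      e k * (e p.1 * f p.2) * f l = if p = (k, l) then e k * f l else 0 := by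
    rintro ⟨i, j⟩
    rw [← mul_assoc, mul_assoc, he.mul_eq, hf.mul_eq]
    by_cases hi : i = k <;> by_cases hj : j = l <;> simp [hi, hj, eq_comm (a := k)]
  have hcoeff : c (k, l) • (e k * f l) = 0 := by
    simpa [Finset.mul_sum, Finset.sum_mul, mul_smul_comm, smul_mul_assoc, hsandwich] using
      congr_arg (e k * · * f l) hc
  exact (smul_eq_zero.mp hcoeff).resolve_right (hef k l)

theorem linearIndependent_pow_mul_pow {m n : ℕ} {a b : R} {e : Fin m → R} {f : Fin n → R}
    {θ : Fin m → F} {η : Fin n → F} (hθ : Function.Injective θ) (hη : Function.Injective η)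
    (ha : ∀ k : ℕ, a ^ k = ∑ i, θ i ^ k • e i) (hb : ∀ k : ℕ, b ^ k = ∑ j, η j ^ k • f j)
    (hef : LinearIndependent F (fun p : Fin m × Fin n => e p.1 * f p.2)) :
    LinearIndependent F (fun p : Fin m × Fin n => a ^ (p.1 : ℕ) * b ^ (p.2 : ℕ)) := by
  have hdet : (Matrix.vandermonde θ ⊗ₖ Matrix.vandermonde η).det ≠ 0 := by
    rw [Matrix.det_kronecker]
    exact mul_ne_zero (pow_ne_zero _ (Matrix.det_vandermonde_ne_zero_iff.mpr hθ))
      (pow_ne_zero _ (Matrix.det_vandermonde_ne_zero_iff.mpr hη))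
  have hexpand : (fun p : Fin m × Fin n => a ^ (p.1 : ℕ) * b ^ (p.2 : ℕ)) =
      fun p => ∑ q, (Matrix.vandermonde θ ⊗ₖ Matrix.vandermonde η) q p • (e q.1 * f q.2) := by
    ext ⟨i, j⟩
    rw [ha, hb, Finset.sum_mul_sum, Fintype.sum_prod_type]
    simp only [Matrix.kronecker_apply, Matrix.vandermonde_apply, smul_mul_smul_comm]
  rw [hexpand]
  exact hef.sum_smul_of_det_ne_zero hdet

end

theorem stmt14 {F V : Type*} [Field F] [AddCommGroup V] [Module F V]
    [FiniteDimensional F V] (d : ℕ) (hdim : Module.finrank F V = d + 1)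
    (A Astar : Module.End F V)
    (θ θs : Fin (d + 1) → F) (hθ : Function.Injective θ) (hθs : Function.Injective θs)
    (E Estar : Fin (d + 1) → Module.End F V)
    (hidem : ∀ i j : Fin (d + 1), E i * E j = if i = j then E i else 0)
    (hidems : ∀ i j : Fin (d + 1), Estar i * Estar j = if i = j then Estar i else 0)
    (hsum : ∑ i, E i = 1) (hsums : ∑ i, Estar i = 1)
    (hrange : ∀ i : Fin (d + 1), LinearMap.range (E i) = Module.End.eigenspace A (θ i))
    (hranges : ∀ i : Fin (d + 1), LinearMap.range (Estar i) = Module.End.eigenspace Astar (θs i))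
    (hnz : ∀ i j : Fin (d + 1), E i * Estar j ≠ 0) :
    (∃ b : Module.Basis (Fin (d + 1) × Fin (d + 1)) F (Module.End F V),
      ∀ p : Fin (d + 1) × Fin (d + 1), b p = E p.1 * Estar p.2) ∧
    (∃ b : Module.Basis (Fin (d + 1) × Fin (d + 1)) F (Module.End F V),
      ∀ p : Fin (d + 1) × Fin (d + 1), b p = A ^ (p.1 : ℕ) * Astar ^ (p.2 : ℕ)) := by
  have hcard : Fintype.card (Fin (d + 1) × Fin (d + 1)) = finrank F (Module.End F V) := by
    simp [Module.finrank_linearMap, hdim]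
  have hprod : LinearIndependent F (fun p : Fin (d + 1) × Fin (d + 1) => E p.1 * Estar p.2) :=
    linearIndependent_mul_of_orthogonalIdempotents (OrthogonalIdempotents.iff_mul_eq.mpr hidem)
      (OrthogonalIdempotents.iff_mul_eq.mpr hidems) hnz
  have hpow := linearIndependent_pow_mul_pow hθ hθs
    (pow_eq_sum_smul_of_mul_eq_smul hsum fun i =>
      Module.End.mul_eq_smul_of_range_le_eigenspace (hrange i).le)
    (pow_eq_sum_smul_of_mul_eq_smul hsums fun i =>
      Module.End.mul_eq_smul_of_range_le_eigenspace (hranges i).le) hprod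
  exact ⟨⟨basisOfLinearIndependentOfCardEqFinrank hprod hcard, fun p => by simp⟩,
    ⟨basisOfLinearIndependentOfCardEqFinrank hpow hcard, fun p => by simp⟩⟩
end

section
/- Let d ≥ 1, n = d+1, q a primitive n-th root of unity in F, ε ∈ F not among 1,q,…,q^d. Define R = R(q,ε) ∈ Mat_n(F) by R_{0,d} = 1−ε, R_{i,i-1} = q^i − ε for 1 ≤ i ≤ d, all other entries zero. Then with A = A(q,ε) and A* = diag(1,q,…,q^d): (i) A*A − εI = R = q(AA* − εI); (ii) qAR = RA and q^{-1}A*R = RA*; (iii) R^{n} = (−1)^d (ε;q)_{n} I, and R is invertible. -/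
/-!
`R` is a weighted cyclic shift (nonzero entries only at `(i, i - 1)`, indices mod `n`), `A` is a
diagonal matrix plus such a shift and `A*` is diagonal. Products of diagonal matrices and weighted
shifts are weighted shifts whose weights multiply pointwise after re-indexing, so (i) and (ii)
reduce to entrywise identities in `F`, using `q ^ (i - 1) = q ^ i / q` cyclically since `q ^ n = 1`.
The `n`-th power of a weighted cyclic shift is the scalar product of all its weights, here
`∏ (q ^ k - ε) = (-1) ^ d (ε; q)_n`: both sides equal `± (1 - ε ^ n)` by `X ^ n - 1 = ∏ (X - q ^ k)`,
which is nonzero because `ε` is not an `n`-th root of unity.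
-/

open Finset

namespace Matrix

variable {G α : Type*} [AddCommGroup G] [DecidableEq G]

def weightedShift [Zero α] (k : G) (h : G → α) : Matrix G G α :=
  of fun i j => if j = i - k then h i else 0

section Semiring

variable [Semiring α]

theorem weightedShift_zero (h : G → α) : weightedShift 0 h = diagonal h := by
  ext i j
  simp [weightedShift, diagonal_apply, eq_comm]

theorem smul_weightedShift (c : α) (k : G) (h : G → α) :
    c • weightedShift k h = weightedShift k fun i => c * h i := by
  ext i j
  simp [weightedShift, mul_ite]

variable [Fintype G]

theorem weightedShift_mul_weightedShift (k k' : G) (h h' : G → α) :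
    weightedShift k h * weightedShift k' h' =
      weightedShift (k + k') fun i => h i * h' (i - k) := by
  ext i j
  rw [mul_apply, sum_eq_single (i - k)]
  · simp [weightedShift, sub_sub]
  · intro b _ hb
    simp [weightedShift, hb]
  · simp

theorem diagonal_mul_weightedShift (a : G → α) (k : G) (h : G → α) :
    diagonal a * weightedShift k h = weightedShift k fun i => a i * h i := by
  ext i j
  simp [weightedShift, mul_ite]

theorem weightedShift_mul_diagonal (a : G → α) (k : G) (h : G → α) :
    weightedShift k h * diagonal a = weightedShift k fun i => h i * a (i - k) := by
  ext i j
  simp only [weightedShift, mul_diagonal, of_apply, ite_mul, zero_mul]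
  split_ifs with hj <;> simp [hj]

end Semiring

theorem weightedShift_pow [CommSemiring α] [Fintype G] (k : G) (h : G → α) (m : ℕ) :
    weightedShift k h ^ m = weightedShift (m • k) fun i => ∏ t ∈ range m, h (i - t • k) := by
  induction m with
  | zero => simp [weightedShift_zero]
  | succ m ih =>
    rw [pow_succ', ih, weightedShift_mul_weightedShift, succ_nsmul']
    congr 1
    funext i
    rw [prod_range_succ', zero_smul, sub_zero, mul_comm]
    simp only [succ_nsmul', sub_add_eq_sub_sub]

open Fin.CommRing in
theorem weightedShift_one_pow_card [CommSemiring α] {n : ℕ} (h : Fin (n + 1) → α) :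
    weightedShift 1 h ^ (n + 1) = (∏ j, h j) • 1 := by
  rw [weightedShift_pow, nsmul_one, Fin.natCast_self, weightedShift_zero, smul_one_eq_diagonal]
  congr 1
  funext i
  rw [← Fin.prod_univ_eq_prod_range (fun t => h (i - t • 1))]
  simp only [nsmul_one, Fin.cast_val_eq_self]
  exact Fintype.prod_equiv (Equiv.subLeft i) _ _ fun _ => rfl

end Matrix

theorem Fin.eq_sub_one_iff {n : ℕ} {i j : Fin (n + 1)} :
    j = i - 1 ↔ (i : ℕ) = j + 1 ∨ (i : ℕ) = 0 ∧ (j : ℕ) = n := by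
  rw [Fin.ext_iff, Fin.coe_sub_one]
  have := j.isLt
  split_ifs with hi <;> simp only [Fin.ext_iff, Fin.val_zero] at hi <;> omega

theorem pow_val_sub_one_mul {M : Type*} [Monoid M] {n : ℕ} {u : M} (hu : u ^ (n + 1) = 1)
    (i : Fin (n + 1)) : u ^ ((i - 1 : Fin (n + 1)) : ℕ) * u = u ^ (i : ℕ) := by
  rw [← pow_succ, Fin.coe_sub_one]
  split_ifs with hi
  · rw [hu, hi, Fin.val_zero, pow_zero]
  · have : (i : ℕ) ≠ 0 := Fin.val_ne_zero_iff.mpr hi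
    rw [Nat.sub_add_cancel (by omega)]

theorem pow_val_sub_one_eq_div {G₀ : Type*} [GroupWithZero G₀] {n : ℕ} {u : G₀}
    (hu : u ^ (n + 1) = 1) (i : Fin (n + 1)) : u ^ ((i - 1 : Fin (n + 1)) : ℕ) = u ^ (i : ℕ) / u :=
  eq_div_of_mul_eq (by rintro rfl; simp at hu) (pow_val_sub_one_mul hu i)

open Polynomial in
theorem IsPrimitiveRoot.prod_range_sub_pow {R : Type*} [CommRing R] [IsDomain R] {q : R} {n : ℕ}
    (hq : IsPrimitiveRoot q n) (hn : 0 < n) (x : R) :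
    ∏ k ∈ range n, (x - q ^ k) = x ^ n - 1 := by
  simpa [eval_prod] using congrArg (eval x) (X_pow_sub_C_eq_prod hq hn (one_pow n)).symm

theorem IsPrimitiveRoot.qpoch_eq_one_sub_pow {F : Type*} [Field F] {q : F} {n : ℕ}
    (hq : IsPrimitiveRoot q n) (hn : 0 < n) (a : F) : qpoch a q n = 1 - a ^ n := by
  rcases eq_or_ne a 0 with rfl | ha
  · simp [qpoch, zero_pow hn.ne']
  calc qpoch a q n = ∏ ℓ ∈ range n, a * (a⁻¹ - q ^ ℓ) := by
        simp only [qpoch, mul_sub, mul_inv_cancel₀ ha]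
    _ = 1 - a ^ n := by
        rw [prod_mul_distrib, prod_const, card_range,
          hq.prod_range_sub_pow hn, mul_sub, ← mul_pow, mul_inv_cancel₀ ha, one_pow, mul_one]

theorem IsPrimitiveRoot.prod_range_pow_sub {F : Type*} [Field F] {q : F} {n : ℕ}
    (hq : IsPrimitiveRoot q (n + 1)) (x : F) :
    ∏ k ∈ range (n + 1), (q ^ k - x) = (-1) ^ n * qpoch x q (n + 1) := by
  calc ∏ k ∈ range (n + 1), (q ^ k - x)
      = ∏ k ∈ range (n + 1), (-1) * (x - q ^ k) := by simp only [neg_one_mul, neg_sub]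
    _ = (-1) ^ n * qpoch x q (n + 1) := by
        rw [prod_mul_distrib, prod_const, card_range,
          hq.prod_range_sub_pow n.succ_pos, hq.qpoch_eq_one_sub_pow n.succ_pos]
        ring

open Matrix

section

variable {F : Type*} [Field F] (q ε : F) (d : ℕ)

def matA : Matrix (Fin (d + 1)) (Fin (d + 1)) F :=
  diagonal (fun i : Fin (d + 1) => q⁻¹ ^ (i : ℕ) * ε) +
    weightedShift 1 fun i : Fin (d + 1) => 1 - q⁻¹ ^ (i : ℕ) * ε

def matAstar : Matrix (Fin (d + 1)) (Fin (d + 1)) F :=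
  diagonal fun i : Fin (d + 1) => q ^ (i : ℕ)

def matR : Matrix (Fin (d + 1)) (Fin (d + 1)) F :=
  weightedShift 1 fun i : Fin (d + 1) => q ^ (i : ℕ) - ε

theorem of_eq_matA (hd : 1 ≤ d) :
    (of fun i j : Fin (d + 1) =>
      if i.val = j.val then q⁻¹ ^ i.val * ε
      else if i.val = j.val + 1 then 1 - q⁻¹ ^ i.val * ε
      else if i.val = 0 ∧ j.val = d then 1 - ε else 0) = matA q ε d := by
  ext i j
  simp only [matA, weightedShift, of_apply, Matrix.add_apply, diagonal_apply, Fin.eq_sub_one_iff]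
  simp only [Fin.ext_iff]
  split_ifs <;> first | (exfalso; omega) | simp_all

theorem of_eq_matR :
    (of fun i j : Fin (d + 1) =>
      if i.val = j.val + 1 then q ^ i.val - ε
      else if i.val = 0 ∧ j.val = d then 1 - ε else 0) = matR q ε d := by
  ext i j
  simp only [matR, weightedShift, of_apply, Fin.eq_sub_one_iff]
  split_ifs <;> simp_all

variable {q}

theorem matAstar_mul_matA_sub (hq : q ≠ 0) : matAstar q d * matA q ε d - ε • 1 = matR q ε d := by
  have hdiag : (fun i : Fin (d + 1) => q ^ (i : ℕ) * (q⁻¹ ^ (i : ℕ) * ε)) = fun _ => ε := by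
    funext i
    rw [inv_pow, mul_inv_cancel_left₀ (pow_ne_zero _ hq)]
  rw [matAstar, matA, matR, Matrix.mul_add, diagonal_mul_diagonal, hdiag, smul_one_eq_diagonal,
    add_sub_cancel_left, diagonal_mul_weightedShift]
  congr 1
  funext i
  rw [inv_pow]
  field_simp

theorem matR_eq_smul_matA_mul_matAstar_sub (hq : q ^ (d + 1) = 1) :
    matR q ε d = q • (matA q ε d * matAstar q d - ε • 1) := by
  have hq0 : q ≠ 0 := by rintro rfl; simp at hq
  have hdiag : (fun i : Fin (d + 1) => q⁻¹ ^ (i : ℕ) * ε * q ^ (i : ℕ)) = fun _ => ε := by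
    funext i
    rw [inv_pow, mul_right_comm, inv_mul_cancel₀ (pow_ne_zero _ hq0), one_mul]
  rw [matAstar, matA, matR, Matrix.add_mul, diagonal_mul_diagonal, hdiag, smul_one_eq_diagonal,
    add_sub_cancel_left, weightedShift_mul_diagonal, smul_weightedShift]
  congr 1
  funext i
  rw [inv_pow, pow_val_sub_one_eq_div hq]
  field_simp

theorem smul_matA_mul_matR (hq : q ^ (d + 1) = 1) :
    q • (matA q ε d * matR q ε d) = matR q ε d * matA q ε d := by
  have hq0 : q ≠ 0 := by rintro rfl; simp at hq
  rw [matA, matR, Matrix.add_mul, Matrix.mul_add, diagonal_mul_weightedShift,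
    weightedShift_mul_diagonal, weightedShift_mul_weightedShift, weightedShift_mul_weightedShift,
    smul_add, smul_weightedShift, smul_weightedShift]
  congr 2 <;> funext i <;> simp only [inv_pow, pow_val_sub_one_eq_div hq] <;> field_simp

theorem inv_smul_matAstar_mul_matR (hq : q ^ (d + 1) = 1) :
    q⁻¹ • (matAstar q d * matR q ε d) = matR q ε d * matAstar q d := by
  rw [matAstar, matR, diagonal_mul_weightedShift, weightedShift_mul_diagonal, smul_weightedShift]
  congr 1
  funext i
  rw [pow_val_sub_one_eq_div hq]
  field_simp

theorem matR_pow_succ (hq : IsPrimitiveRoot q (d + 1)) :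
    matR q ε d ^ (d + 1) = ((-1 : F) ^ d * qpoch ε q (d + 1)) • 1 := by
  rw [matR, weightedShift_one_pow_card, Fin.prod_univ_eq_prod_range (fun k : ℕ => q ^ k - ε),
    hq.prod_range_pow_sub]

theorem isUnit_matR (hq : IsPrimitiveRoot q (d + 1)) (hε : ε ^ (d + 1) ≠ 1) :
    IsUnit (matR q ε d) := by
  have hc : (-1 : F) ^ d * qpoch ε q (d + 1) ≠ 0 := by
    rw [hq.qpoch_eq_one_sub_pow d.succ_pos]
    exact mul_ne_zero (pow_ne_zero _ (neg_ne_zero.mpr one_ne_zero)) (sub_ne_zero.mpr hε.symm)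
  rw [← isUnit_pow_iff d.succ_ne_zero, matR_pow_succ ε d hq, ← Algebra.algebraMap_eq_smul_one]
  exact (IsUnit.mk0 _ hc).map _

end

theorem stmt18 {F : Type*} [Field F] (d : ℕ) (hd : 1 ≤ d) (q ε : F)
    (hq : IsPrimitiveRoot q (d + 1))
    (hε : ∀ i : ℕ, i ≤ d → ε ≠ q ^ i)
    (A Astar R : Matrix (Fin (d + 1)) (Fin (d + 1)) F)
    (hA : A = Matrix.of fun i j : Fin (d + 1) =>
      if i.val = j.val then q⁻¹ ^ i.val * ε
      else if i.val = j.val + 1 then 1 - q⁻¹ ^ i.val * ε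
      else if i.val = 0 ∧ j.val = d then 1 - ε else 0)
    (hAstar : Astar = Matrix.diagonal fun i : Fin (d + 1) => q ^ i.val)
    (hR : R = Matrix.of fun i j : Fin (d + 1) =>
      if i.val = j.val + 1 then q ^ i.val - ε
      else if i.val = 0 ∧ j.val = d then 1 - ε else 0) :
    (Astar * A - ε • 1 = R ∧ R = q • (A * Astar - ε • 1)) ∧
      (q • (A * R) = R * A ∧ q⁻¹ • (Astar * R) = R * Astar) ∧
      (R ^ (d + 1) = ((-1 : F) ^ d * qpoch ε q (d + 1)) • 1 ∧ IsUnit R) := by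
  obtain rfl : A = matA q ε d := hA.trans (of_eq_matA q ε d hd)
  obtain rfl : Astar = matAstar q d := hAstar
  obtain rfl : R = matR q ε d := hR.trans (of_eq_matR q ε d)
  have hq1 : q ^ (d + 1) = 1 := hq.pow_eq_one
  have hε' : ε ^ (d + 1) ≠ 1 := fun h => by
    obtain ⟨i, hi, rfl⟩ := hq.eq_pow_of_pow_eq_one h
    exact hε i (by omega) rfl
  exact ⟨⟨matAstar_mul_matA_sub ε d (hq.ne_zero d.succ_ne_zero),
      matR_eq_smul_matA_mul_matAstar_sub ε d hq1⟩,
    ⟨smul_matA_mul_matR ε d hq1, inv_smul_matAstar_mul_matR ε d hq1⟩,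
    matR_pow_succ ε d hq, isUnit_matR ε d hq hε'⟩
end
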